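/- arXiv:2404.19019 — 3 statements merged into one kernel-verified Lean document; each statement's English description precedes it below -/
import Mathlib

section
/- (Lemma 4.2, general cluster form.) For an edge e = (u,v) of T, let C(e) ⊆ V consist of u, v, and all endpoints of edges in I(e). Then: (i) the edges of T with both endpoints in C(e) are exactly I(e) ∪ {e}; and (ii) S(e) equals Cut(C(e), V∖C(e)), the set of edges of T with exactly one endpoint in C(e). Consequently, p(e) is the minimum-rank edge with exactly one endpoint in C(e), whenever this cut is nonempty. -/
/- Single tree setting: `G` is a finite tree with injective edge ranks `r`.
`edgesBetween G e f` is the set of edges strictly between edges `e` and `f`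
on the unique tree path connecting them (an edge `g ∉ {e,f}` lies on this path
iff it belongs to every walk containing both `e` and `f`). -/

open SimpleGraph

variable {V : Type*}

/-- The set of edges lying strictly between edges `e` and `f` on the tree path
connecting them (excluding `e` and `f`). -/
def edgesBetween (G : SimpleGraph V) (e f : Sym2 V) : Set (Sym2 V) :=
  {g | g ∈ G.edgeSet ∧ g ≠ e ∧ g ≠ f ∧
    ∀ (a b : V) (w : G.Walk a b), e ∈ w.edges → f ∈ w.edges → g ∈ w.edges}

/-- `f` is an adjacent superior of `e`: `r e < r f` and every edge `g` on the
path between `e` and `f` satisfies `r g < r e`. -/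
def AdjSup (G : SimpleGraph V) (r : Sym2 V → ℕ) (e f : Sym2 V) : Prop :=
  f ∈ G.edgeSet ∧ r e < r f ∧ ∀ g ∈ edgesBetween G e f, r g < r e

/-- `f` is an adjacent inferior of `e`: `r f < r e` and every edge `g` on the
path between `e` and `f` satisfies `r g < r e`. -/
def AdjInf (G : SimpleGraph V) (r : Sym2 V → ℕ) (e f : Sym2 V) : Prop :=
  f ∈ G.edgeSet ∧ r f < r e ∧ ∀ g ∈ edgesBetween G e f, r g < r e

/-- `f` is the SLD parent of `e`: the minimum-rank adjacent superior of `e`. -/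
def IsParent (G : SimpleGraph V) (r : Sym2 V → ℕ) (e f : Sym2 V) : Prop :=
  AdjSup G r e f ∧ ∀ g, AdjSup G r e g → r f ≤ r g

/-- The spine of `e`: the set of edges obtained by iterating the SLD parent
function starting from `e` (including `e` itself). -/
def spine (G : SimpleGraph V) (r : Sym2 V → ℕ) (e : Sym2 V) : Set (Sym2 V) :=
  {f | Relation.ReflTransGen (IsParent G r) e f}

/-- The cluster `C(e)` of an edge `e`: its endpoints together with all
endpoints of edges in `I(e)`. -/
def cluster (G : SimpleGraph V) (r : Sym2 V → ℕ) (e : Sym2 V) : Set V :=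
  {x | x ∈ e ∨ ∃ f, AdjInf G r e f ∧ x ∈ f}

/-! Call `x` low-reachable if a walk whose edges all have rank `< r e` joins it to an endpoint
of `e`. In a tree, some path from an endpoint of `e` to an endpoint of `g` avoids both edges,
and all its edges then lie strictly between `e` and `g`; hence the vertices of an adjacent
inferior are low-reachable, while the last edge of a low walk is an adjacent inferior, so
`C(e)` is exactly the low-reachable set. Every edge of a tree is a bridge, so an edge `g ≠ e`
with both endpoints in `C(e)` lies on the low walk through `e` joining them and has rank
`< r e`. An edge leaving `C(e)` has rank `> r e`, since otherwise it would extend a low walk,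
and the edges between it and `e` lie on the low walk to its inner endpoint. -/

namespace SimpleGraph

variable {G : SimpleGraph V}

namespace Walk

lemma exists_walk_edges_subset_of_mem_support {a b y z : V} (w : G.Walk a b)
    (hy : y ∈ w.support) (hz : z ∈ w.support) : ∃ w' : G.Walk y z, w'.edges ⊆ w.edges := by
  classical
  refine ⟨(w.takeUntil y hy).reverse.append (w.takeUntil z hz), fun h hh => ?_⟩
  rw [edges_append, List.mem_append, edges_reverse, List.mem_reverse] at hh
  exact hh.elim (fun hh => w.edges_takeUntil_subset_edges hy hh)
    (fun hh => w.edges_takeUntil_subset_edges hz hh)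

lemma exists_walk_not_mem_edges_of_mem {e : Sym2 V} {x a : V} (w : G.Walk x a) (ha : a ∈ e) :
    ∃ t ∈ e, ∃ w' : G.Walk x t, e ∉ w'.edges ∧ w'.edges ⊆ w.edges := by
  induction w with
  | nil => exact ⟨_, ha, nil, by simp, by simp⟩
  | @cons x y a hxy w ih =>
    obtain ⟨t, ht, w', hew', hsub⟩ := ih ha
    by_cases hxe : s(x, y) = e
    · exact ⟨x, hxe ▸ Sym2.mem_mk_left x y, nil, by simp, by simp⟩
    · refine ⟨t, ht, cons hxy w', ?_, List.cons_subset_cons _ hsub⟩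
      simp [hew', Ne.symm hxe]

end Walk

open Walk

lemma exists_walk_forall_edges_eq {e : Sym2 V} (he : e ∈ G.edgeSet) {s t : V}
    (hs : s ∈ e) (ht : t ∈ e) : ∃ w : G.Walk s t, ∀ h ∈ w.edges, h = e := by
  by_cases hst : s = t
  · subst hst
    exact ⟨nil, by simp⟩
  · obtain rfl := (Sym2.mem_and_mem_iff hst).mp ⟨hs, ht⟩
    exact ⟨cons (G.mem_edgeSet.mp he) nil, by simp⟩

lemma IsAcyclic.mem_edges_of_isPath (hA : G.IsAcyclic) {s c : V} {q : G.Walk s c}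
    (hq : q.IsPath) {h : Sym2 V} (hh : h ∈ q.edges) (w : G.Walk s c) : h ∈ w.edges := by
  classical
  have hqw : (⟨q, hq⟩ : G.Path s c) = ⟨w.bypass, w.bypass_isPath⟩ :=
    (hA.subsingleton_path s c).elim _ _
  rw [Subtype.mk.injEq] at hqw
  exact w.edges_bypass_subset_edges (hqw ▸ hh)

lemma IsAcyclic.mem_edgesBetween_of_isPath (hA : G.IsAcyclic) {e g : Sym2 V} {s c : V}
    {q : G.Walk s c} (hq : q.IsPath) (hs : s ∈ e) (hc : c ∈ g) {h : Sym2 V}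
    (hh : h ∈ q.edges) (hhe : h ≠ e) (hhg : h ≠ g) : h ∈ edgesBetween G e g := by
  refine ⟨q.edges_subset_edgeSet hh, hhe, hhg, fun a b w hew hgw => ?_⟩
  obtain ⟨w', hw'⟩ := w.exists_walk_edges_subset_of_mem_support
    (w.mem_support_of_mem_edges hew hs) (w.mem_support_of_mem_edges hgw hc)
  exact hw' (hA.mem_edges_of_isPath hq hh w')

lemma IsTree.exists_walk_forall_edges_mem_edgesBetween (hT : G.IsTree) (e g : Sym2 V) :
    ∃ s ∈ e, ∃ c ∈ g, ∃ q : G.Walk s c, ∀ h ∈ q.edges, h ∈ edgesBetween G e g := by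
  classical
  obtain ⟨w₀⟩ := hT.connected.preconnected e.out.1 g.out.1
  obtain ⟨c, hc, w₁, hgw₁, -⟩ := w₀.exists_walk_not_mem_edges_of_mem (Sym2.out_fst_mem g)
  obtain ⟨s, hs, w₂, hew₂, hw₂⟩ :=
    w₁.reverse.exists_walk_not_mem_edges_of_mem (Sym2.out_fst_mem e)
  refine ⟨s, hs, c, hc, w₂.reverse.bypass, fun h hh => ?_⟩
  have hh₂ : h ∈ w₂.edges := by simpa using w₂.reverse.edges_bypass_subset_edges hh
  have hh₁ : h ∈ w₁.edges := by simpa using hw₂ hh₂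
  exact hT.isAcyclic.mem_edgesBetween_of_isPath w₂.reverse.bypass_isPath hs hc hh
    (ne_of_mem_of_not_mem hh₂ hew₂) (ne_of_mem_of_not_mem hh₁ hgw₁)

section LowReachable

variable {r : Sym2 V → ℕ} {e : Sym2 V}

def LowReachable (G : SimpleGraph V) (r : Sym2 V → ℕ) (e : Sym2 V) (x : V) : Prop :=
  ∃ s ∈ e, ∃ w : G.Walk x s, ∀ h ∈ w.edges, r h < r e

lemma lowReachable_of_mem {x : V} (hx : x ∈ e) : LowReachable G r e x :=
  ⟨x, hx, nil, by simp⟩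

lemma LowReachable.of_adj {a b : V} (ha : LowReachable G r e a) (hab : G.Adj a b)
    (hrab : r s(a, b) < r e) : LowReachable G r e b := by
  obtain ⟨s, hs, w, hw⟩ := ha
  refine ⟨s, hs, cons hab.symm w, fun h hh => ?_⟩
  rw [edges_cons, List.mem_cons, Sym2.eq_swap] at hh
  exact hh.elim (fun hh => hh ▸ hrab) (hw h)

lemma LowReachable.rank_lt_of_mem_edgesBetween (he : e ∈ G.edgeSet) {a b : V}
    (ha : LowReachable G r e a) (hab : G.Adj a b) {h : Sym2 V}
    (hh : h ∈ edgesBetween G e s(a, b)) : r h < r e := by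
  obtain ⟨s, hs, w, hw⟩ := ha
  obtain ⟨s', rfl⟩ := Sym2.mem_iff_exists.mp hs
  obtain ⟨-, hhe, hhab, hall⟩ := hh
  have hmem := hall b s' (cons hab.symm (w.concat (G.mem_edgeSet.mp he))) (by simp) (by simp)
  simp only [edges_cons, edges_concat, List.concat_eq_append, List.mem_cons, List.mem_append,
    List.not_mem_nil, or_false, Sym2.eq_swap] at hmem
  rcases hmem with rfl | hmem | rfl
  · exact absurd rfl hhab
  · exact hw h hmem
  · exact absurd rfl hhe

lemma mem_cluster_of_lowReachable (he : e ∈ G.edgeSet) {x : V} (hx : LowReachable G r e x) :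
    x ∈ cluster G r e := by
  obtain ⟨s, hs, w, hw⟩ := hx
  cases w with
  | nil => exact Or.inl hs
  | @cons _ c _ hxc w =>
    have hc : LowReachable G r e c := ⟨s, hs, w, fun h hh => hw h (by simp [hh])⟩
    have hrank : r s(c, x) < r e := by simpa [Sym2.eq_swap] using hw s(x, c)
    exact Or.inr ⟨s(c, x),
      ⟨hxc.symm, hrank, fun h => hc.rank_lt_of_mem_edgesBetween he hxc.symm⟩,
      Sym2.mem_mk_right c x⟩

lemma IsTree.lowReachable_of_mem_cluster (hT : G.IsTree) {x : V} (hx : x ∈ cluster G r e) :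
    LowReachable G r e x := by
  rcases hx with hx | ⟨f, ⟨hf, hfr, hfe⟩, hxf⟩
  · exact lowReachable_of_mem hx
  obtain ⟨s, hs, c, hc, q, hq⟩ := hT.exists_walk_forall_edges_mem_edgesBetween e f
  obtain ⟨m, hm⟩ := exists_walk_forall_edges_eq hf hxf hc
  refine ⟨s, hs, m.append q.reverse, fun h hh => ?_⟩
  rw [edges_append, List.mem_append, edges_reverse, List.mem_reverse] at hh
  rcases hh with hh | hh
  · exact hm h hh ▸ hfr
  · exact hfe h (hq h hh)

lemma IsAcyclic.rank_lt_of_lowReachable (hA : G.IsAcyclic) (he : e ∈ G.edgeSet) {a b : V}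
    (hab : G.Adj a b) (hne : s(a, b) ≠ e) (ha : LowReachable G r e a)
    (hb : LowReachable G r e b) : r s(a, b) < r e := by
  obtain ⟨s, hs, wa, hwa⟩ := ha
  obtain ⟨t, ht, wb, hwb⟩ := hb
  obtain ⟨m, hm⟩ := exists_walk_forall_edges_eq he hs ht
  have hmem := isBridge_iff_forall_walk_mem_edges.mp (isAcyclic_iff_forall_isBridge.mp hA hab)
    (wa.append (m.append wb.reverse))
  simp only [edges_append, edges_reverse, List.mem_append, List.mem_reverse] at hmem
  rcases hmem with hmem | hmem | hmem
  · exact hwa _ hmem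
  · exact absurd (hm _ hmem) hne
  · exact hwb _ hmem

lemma IsTree.forall_mem_cluster_iff (hT : G.IsTree) (he : e ∈ G.edgeSet) {g : Sym2 V}
    (hg : g ∈ G.edgeSet) : (∀ x ∈ g, x ∈ cluster G r e) ↔ AdjInf G r e g ∨ g = e := by
  refine ⟨fun hcl => ?_, ?_⟩
  · by_cases hge : g = e
    · exact Or.inr hge
    induction g using Sym2.ind with
    | _ a b =>
      have ha := hT.lowReachable_of_mem_cluster (hcl a (Sym2.mem_mk_left a b))
      have hb := hT.lowReachable_of_mem_cluster (hcl b (Sym2.mem_mk_right a b))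
      exact Or.inl ⟨hg, hT.isAcyclic.rank_lt_of_lowReachable he hg hge ha hb,
        fun h => ha.rank_lt_of_mem_edgesBetween he hg⟩
  · rintro (hinf | rfl)
    · exact fun x hx => Or.inr ⟨g, hinf, hx⟩
    · exact fun x hx => Or.inl hx

lemma IsTree.adjSup_iff (hT : G.IsTree) (hr : Set.InjOn r G.edgeSet) (he : e ∈ G.edgeSet)
    {g : Sym2 V} : AdjSup G r e g ↔ g ∈ G.edgeSet ∧
      ∃ a b, g = s(a, b) ∧ a ∈ cluster G r e ∧ b ∉ cluster G r e := by
  constructor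
  · rintro ⟨hg, hlt, hbtw⟩
    obtain ⟨s, hs, c, hc, q, hq⟩ := hT.exists_walk_forall_edges_mem_edgesBetween e g
    have hcr : LowReachable G r e c :=
      ⟨s, hs, q.reverse, fun h hh => hbtw h (hq h (by simpa using hh))⟩
    obtain ⟨d, rfl⟩ := Sym2.mem_iff_exists.mp hc
    refine ⟨hg, c, d, rfl, mem_cluster_of_lowReachable he hcr, fun hd => ?_⟩
    have hne : s(c, d) ≠ e := fun h => hlt.ne (by rw [h])
    exact lt_asymm hlt (hT.isAcyclic.rank_lt_of_lowReachable he hg hne hcr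
      (hT.lowReachable_of_mem_cluster hd))
  · rintro ⟨hg, a, b, rfl, ha, hb⟩
    have har := hT.lowReachable_of_mem_cluster ha
    have hne : s(a, b) ≠ e := fun h => hb (Or.inl (h ▸ Sym2.mem_mk_right a b))
    have hlt : r e < r s(a, b) := by
      refine lt_of_le_of_ne (not_lt.mp fun hlt => hb ?_) fun h => hne (hr hg he h.symm)
      exact mem_cluster_of_lowReachable he (har.of_adj hg hlt)
    exact ⟨hg, hlt, fun h => har.rank_lt_of_mem_edgesBetween he hg⟩

end LowReachable

end SimpleGraph

theorem stmt13_general (G : SimpleGraph V) (hT : G.IsTree)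
    (r : Sym2 V → ℕ) (hr : Set.InjOn r G.edgeSet)
    (e : Sym2 V) (he : e ∈ G.edgeSet) :
    (∀ g ∈ G.edgeSet, (∀ x ∈ g, x ∈ cluster G r e) ↔ (AdjInf G r e g ∨ g = e)) ∧
    (∀ g, AdjSup G r e g ↔ (g ∈ G.edgeSet ∧
      ∃ a b, g = s(a, b) ∧ a ∈ cluster G r e ∧ b ∉ cluster G r e)) ∧
    (∀ f, IsParent G r e f ↔
      ((f ∈ G.edgeSet ∧ ∃ a b, f = s(a, b) ∧ a ∈ cluster G r e ∧ b ∉ cluster G r e) ∧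
        ∀ g, (g ∈ G.edgeSet ∧
            ∃ a b, g = s(a, b) ∧ a ∈ cluster G r e ∧ b ∉ cluster G r e) →
          r f ≤ r g)) := by
  refine ⟨fun g => hT.forall_mem_cluster_iff he, fun g => hT.adjSup_iff hr he, fun f => ?_⟩
  simp only [IsParent, hT.adjSup_iff hr he]

/-- Lemma 4.2 (general cluster form): (i) the edges of `T` with both endpoints
in `C(e)` are exactly `I(e) ∪ {e}`; (ii) `S(e) = Cut(C(e), V∖C(e))`;
consequently `p(e)` is the minimum-rank edge with exactly one endpoint in
`C(e)`, whenever this cut is nonempty. -/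
theorem stmt13 [Fintype V] (G : SimpleGraph V) (hT : G.IsTree)
    (r : Sym2 V → ℕ) (hr : Set.InjOn r G.edgeSet)
    (e : Sym2 V) (he : e ∈ G.edgeSet) :
    (∀ g ∈ G.edgeSet, (∀ x ∈ g, x ∈ cluster G r e) ↔ (AdjInf G r e g ∨ g = e)) ∧
    (∀ g, AdjSup G r e g ↔ (g ∈ G.edgeSet ∧
      ∃ a b, g = s(a, b) ∧ a ∈ cluster G r e ∧ b ∉ cluster G r e)) ∧
    (∀ f, IsParent G r e f ↔
      ((f ∈ G.edgeSet ∧ ∃ a b, f = s(a, b) ∧ a ∈ cluster G r e ∧ b ∉ cluster G r e) ∧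
        ∀ g, (g ∈ G.edgeSet ∧
            ∃ a b, g = s(a, b) ∧ a ∈ cluster G r e ∧ b ∉ cluster G r e) →
          r f ≤ r g)) :=
  stmt13_general G hT r hr e he
end

section
/- (Spine-membership characterization used in SLD-Merge.) Let v be a vertex of T incident to at least one edge, and let e* be the minimum-rank edge incident to v. For every edge e of T, e ∈ spine(e*) if and only if every edge lying on the tree path from e to v (excluding e itself) has rank less than r(e). -/
/- Single tree setting: `G` is a finite tree with injective edge ranks `r`.
`edgesBetween G e f` is the set of edges strictly between edges `e` and `f`
on the unique tree path connecting them (an edge `g ∉ {e,f}` lies on this path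
iff it belongs to every walk containing both `e` and `f`). -/

open SimpleGraph

variable {V : Type*}

/-- Edge `f` lies on the `u`-side of edge `e` (strictly closer to `u`):
`f` is reachable from `u` by a walk avoiding `e`. -/
def OnSide (G : SimpleGraph V) (e : Sym2 V) (u : V) (f : Sym2 V) : Prop :=
  ∃ (x : V) (w : G.Walk u x), f ∈ w.edges ∧ e ∉ w.edges

/-- Edges lying on the tree path from edge `f` to vertex `u`, excluding `f`
itself: the edges `g ≠ f` belonging to every walk from `u` containing `f`. -/
def edgesBetweenEV (G : SimpleGraph V) (f : Sym2 V) (u : V) : Set (Sym2 V) :=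
  {g | g ∈ G.edgeSet ∧ g ≠ f ∧ ∀ (x : V) (w : G.Walk u x), f ∈ w.edges → g ∈ w.edges}

/-
An edge `g` lies on the tree path between two vertices iff deleting `g` disconnects them; the
path sets in the statement are described through this separation relation. Going up the spine,
the path from the parent `c` of `b` to `v` consists of `b`, the path from `b` to `v` and the edges
between `b` and `c`, all ranked below `r b < r c`. Conversely, if every edge on the path from `e`
to `v` is ranked below `e`, the highest ranked edge `f` of that path (or `e*` if it is empty)
satisfies the same hypothesis, so it lies on the spine by induction on the rank, and `e` is an
adjacent superior of `f`. Finally every adjacent superior of `f` is reached from `f` by iterating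
the parent function: the parent is the lowest adjacent superior, and the others are adjacent
superiors of it.
-/

namespace SimpleGraph

section EdgeSeparates

variable {G : SimpleGraph V} {g e f : Sym2 V} {a b c p x y z : V}

theorem adj_other_of_mem_edgeSet (he : e ∈ G.edgeSet) (ha : a ∈ e) :
    G.Adj a (Sym2.Mem.other ha) := by
  rwa [← mem_edgeSet, Sym2.other_spec]

def EdgeSeparates (G : SimpleGraph V) (g : Sym2 V) (x y : V) : Prop :=
  ¬ (G.deleteEdges {g}).Reachable x y

theorem edgeSeparates_iff_forall_walk :
    G.EdgeSeparates g x y ↔ ∀ w : G.Walk x y, g ∈ w.edges := by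
  induction g using Sym2.ind with
  | _ u u' => simp [EdgeSeparates, reachable_deleteEdges_iff_exists_walk]

theorem EdgeSeparates.mem_edges (h : G.EdgeSeparates g x y) (w : G.Walk x y) : g ∈ w.edges :=
  edgeSeparates_iff_forall_walk.mp h w

theorem EdgeSeparates.irrefl : ¬ G.EdgeSeparates g x x := fun h => h .rfl

theorem EdgeSeparates.symm (h : G.EdgeSeparates g x y) : G.EdgeSeparates g y x :=
  fun h' => h h'.symm

theorem EdgeSeparates.left_or_right (h : G.EdgeSeparates g x z) (y : V) :
    G.EdgeSeparates g x y ∨ G.EdgeSeparates g y z := by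
  unfold EdgeSeparates at *
  by_contra! hn
  exact h (hn.1.trans hn.2)

theorem not_edgeSeparates_of_mem (he : e ∈ G.edgeSet) (hge : g ≠ e) (hx : x ∈ e) (hy : y ∈ e) :
    ¬ G.EdgeSeparates g x y := by
  induction e using Sym2.ind with
  | _ u u' =>
    have hr : (G.deleteEdges {g}).Reachable u u' :=
      (deleteEdges_adj.mpr ⟨he, by simpa [eq_comm] using hge⟩).reachable
    rcases Sym2.mem_iff.mp hx with rfl | rfl <;> rcases Sym2.mem_iff.mp hy with rfl | rfl
    · exact EdgeSeparates.irrefl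
    · exact fun h => h hr
    · exact fun h => h hr.symm
    · exact EdgeSeparates.irrefl

theorem EdgeSeparates.of_mem (h : G.EdgeSeparates g x a) (he : e ∈ G.edgeSet) (hge : g ≠ e)
    (ha : a ∈ e) (hb : b ∈ e) : G.EdgeSeparates g x b :=
  (h.left_or_right b).resolve_right (not_edgeSeparates_of_mem he hge hb ha)

theorem EdgeSeparates.mem_edges_of_mem_support (h : G.EdgeSeparates g a b) {w : G.Walk x y}
    (ha : a ∈ w.support) (hb : b ∈ w.support) : g ∈ w.edges := by
  classical
  rcases h.left_or_right x with hax | hxb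
  · exact w.edges_takeUntil_subset_edges ha (hax.symm.mem_edges _)
  · exact w.edges_takeUntil_subset_edges hb (hxb.mem_edges _)

theorem Walk.IsTrail.not_edgeSeparates_and {w : G.Walk x y} (hw : w.IsTrail)
    (hp : p ∈ w.support) : ¬ (G.EdgeSeparates g x p ∧ G.EdgeSeparates g p y) := by
  classical
  rintro ⟨hxp, hpy⟩
  exact hw.disjoint_edges_takeUntil_dropUntil hp (hxp.mem_edges _) (hpy.mem_edges _)

/-- An endpoint `p` of an edge separating `x` from `y` lies on every path from `x` to `y`, and
such a path cannot cross `g` both before and after `p`. -/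
theorem Connected.not_edgeSeparates_and (hG : G.Connected) (hf : G.EdgeSeparates f x y)
    (hp : p ∈ f) : ¬ (G.EdgeSeparates g x p ∧ G.EdgeSeparates g p y) := by
  classical
  obtain ⟨w⟩ := hG.preconnected x y
  exact w.toPath.2.isTrail.not_edgeSeparates_and
    (Walk.mem_support_of_mem_edges (hf.mem_edges _) hp)

theorem IsAcyclic.edgeSeparates (hG : G.IsAcyclic) (hab : G.Adj a b) :
    G.EdgeSeparates s(a, b) a b :=
  isBridge_iff.mp (isAcyclic_iff_forall_adj_isBridge.mp hG hab)

end EdgeSeparates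

section PathEdges

variable {G : SimpleGraph V} {g e f : Sym2 V} {a c v : V}

theorem mem_edgesBetweenEV_iff (he : e ∈ G.edgeSet) :
    g ∈ edgesBetweenEV G e v ↔ g ∈ G.edgeSet ∧ g ≠ e ∧ ∀ a ∈ e, G.EdgeSeparates g v a := by
  refine and_congr_right fun _ => and_congr_right fun hge =>
    ⟨fun h a ha => ?_, fun h x w hew => ?_⟩
  · refine edgeSeparates_iff_forall_walk.mpr fun w => ?_
    have := h _ (w.concat (adj_other_of_mem_edgeSet he ha)) (by simp [Sym2.other_spec])
    simpa [Sym2.other_spec, hge] using this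
  · exact (h _ e.out_fst_mem).mem_edges_of_mem_support w.start_mem_support
      (Walk.mem_support_of_mem_edges hew e.out_fst_mem)

theorem mem_edgesBetweenEV_of_edgeSeparates (he : e ∈ G.edgeSet) (hg : g ∈ G.edgeSet)
    (hge : g ≠ e) (ha : a ∈ e) (h : G.EdgeSeparates g v a) : g ∈ edgesBetweenEV G e v :=
  (mem_edgesBetweenEV_iff he).mpr ⟨hg, hge, fun _ hc => h.of_mem he hge ha hc⟩

theorem edgesBetweenEV_eq_empty (he : e ∈ G.edgeSet) (hv : v ∈ e) : edgesBetweenEV G e v = ∅ :=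
  Set.eq_empty_of_forall_notMem fun _ hg =>
    EdgeSeparates.irrefl (((mem_edgesBetweenEV_iff he).mp hg).2.2 v hv)

theorem mem_edgesBetween_iff (he : e ∈ G.edgeSet) (hf : f ∈ G.edgeSet) :
    g ∈ edgesBetween G e f ↔
      g ∈ G.edgeSet ∧ g ≠ e ∧ g ≠ f ∧ ∀ a ∈ e, ∀ c ∈ f, G.EdgeSeparates g a c := by
  refine and_congr_right fun _ => and_congr_right fun hge => and_congr_right fun hgf =>
    ⟨fun h a ha c hc => ?_, fun h x y w hew hfw => ?_⟩
  · refine edgeSeparates_iff_forall_walk.mpr fun w => ?_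
    have he' : s(Sym2.Mem.other ha, a) = e := by rw [Sym2.eq_swap, Sym2.other_spec]
    have := h _ _ (.cons (adj_other_of_mem_edgeSet he ha).symm
      (w.concat (adj_other_of_mem_edgeSet hf hc))) (by simp [he']) (by simp [Sym2.other_spec])
    simpa [he', Sym2.other_spec, hge, hgf] using this
  · exact (h _ e.out_fst_mem _ f.out_fst_mem).mem_edges_of_mem_support
      (Walk.mem_support_of_mem_edges hew e.out_fst_mem)
      (Walk.mem_support_of_mem_edges hfw f.out_fst_mem)

theorem mem_edgesBetween_of_edgeSeparates (he : e ∈ G.edgeSet) (hf : f ∈ G.edgeSet)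
    (hg : g ∈ G.edgeSet) (hge : g ≠ e) (hgf : g ≠ f) (ha : a ∈ e) (hc : c ∈ f)
    (h : G.EdgeSeparates g a c) : g ∈ edgesBetween G e f :=
  (mem_edgesBetween_iff he hf).mpr ⟨hg, hge, hgf, fun _ ha' _ hc' =>
    ((h.of_mem hf hgf hc hc').symm.of_mem he hge ha ha').symm⟩

theorem edgesBetweenEV_subset_union (he : e ∈ G.edgeSet) (hf : f ∈ G.edgeSet) :
    edgesBetweenEV G f v ⊆ insert e (edgesBetweenEV G e v ∪ edgesBetween G e f) := by
  intro g hg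
  obtain ⟨hgE, hgf, hsep⟩ := (mem_edgesBetweenEV_iff hf).mp hg
  rcases eq_or_ne g e with rfl | hge
  · exact Set.mem_insert _ _
  refine Or.inr (((hsep _ f.out_fst_mem).left_or_right e.out.1).imp (fun h => ?_) (fun h => ?_))
  · exact mem_edgesBetweenEV_of_edgeSeparates he hgE hge e.out_fst_mem h
  · exact mem_edgesBetween_of_edgeSeparates he hf hgE hge hgf e.out_fst_mem f.out_fst_mem h

theorem edgesBetween_subset_union (hg : g ∈ G.edgeSet) (he : e ∈ G.edgeSet)
    (hf : f ∈ G.edgeSet) :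
    edgesBetween G e f ⊆ insert g (edgesBetween G g e ∪ edgesBetween G g f) := by
  intro k hk
  obtain ⟨hkE, hke, hkf, hsep⟩ := (mem_edgesBetween_iff he hf).mp hk
  rcases eq_or_ne k g with rfl | hkg
  · exact Set.mem_insert _ _
  refine Or.inr (((hsep _ e.out_fst_mem _ f.out_fst_mem).left_or_right g.out.1).imp
    (fun h => ?_) (fun h => ?_))
  · exact mem_edgesBetween_of_edgeSeparates hg he hkE hkg hke g.out_fst_mem e.out_fst_mem h.symm
  · exact mem_edgesBetween_of_edgeSeparates hg hf hkE hkg hkf g.out_fst_mem f.out_fst_mem h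

theorem edgesBetween_subset_edgesBetweenEV (hf : f ∈ edgesBetweenEV G e v) :
    edgesBetween G f e ⊆ edgesBetweenEV G e v :=
  fun _ hg => ⟨hg.1, hg.2.2.1, fun x w hew => hg.2.2.2 _ _ w (hf.2.2 x w hew) hew⟩

theorem IsTree.edgesBetweenEV_nonempty (hT : G.IsTree) (he : e ∈ G.edgeSet) (hv : v ∉ e) :
    (edgesBetweenEV G e v).Nonempty := by
  classical
  obtain ⟨w⟩ := hT.connected.preconnected v e.out.1
  obtain ⟨w, hw⟩ := w.toPath
  cases w with
  | nil => exact absurd e.out_fst_mem hv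
  | @cons _ u _ hadj w =>
    have hvw : s(v, u) ∉ w.edges := fun h =>
      ((Walk.cons_isPath_iff hadj w).mp hw).2 (w.fst_mem_support_of_mem_edges h)
    have hsep : G.EdgeSeparates s(v, u) v e.out.1 :=
      ((hT.isAcyclic.edgeSeparates hadj).left_or_right _).resolve_right
        fun h => hvw (h.symm.mem_edges w)
    exact ⟨_, mem_edgesBetweenEV_of_edgeSeparates he hadj
      (fun h => hv (h ▸ Sym2.mem_mk_left v u)) e.out_fst_mem hsep⟩

theorem IsTree.edgesBetweenEV_subset (hT : G.IsTree) (he : e ∈ G.edgeSet)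
    (hf : f ∈ edgesBetweenEV G e v) : edgesBetweenEV G f v ⊆ edgesBetweenEV G e v := by
  intro g hg
  refine ⟨hg.1, ?_, fun x w hew => hg.2.2 x w (hf.2.2 x w hew)⟩
  rintro rfl
  have hfv := ((mem_edgesBetweenEV_iff he).mp hf).2.2
  have hgv := ((mem_edgesBetweenEV_iff hf.1).mp hg).2.2 _ f.out_fst_mem
  -- As a bridge, `e` separates an endpoint `p` of `f` from one of its own endpoints `c`; as `f`
  -- separates `v` from `c`, the path from `v` to `c` passes through `p` and crosses `e` twice.
  induction g using Sym2.ind with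
  | _ c c' =>
    rcases (hT.isAcyclic.edgeSeparates he).left_or_right f.out.1 with h | h
    · exact hT.connected.not_edgeSeparates_and (hfv c (Sym2.mem_mk_left c c')) f.out_fst_mem
        ⟨hgv, h.symm⟩
    · exact hT.connected.not_edgeSeparates_and (hfv c' (Sym2.mem_mk_right c c')) f.out_fst_mem
        ⟨hgv, h⟩

end PathEdges

end SimpleGraph

section SLD

variable {G : SimpleGraph V} {r : Sym2 V → ℕ} {v : V}

theorem AdjSup.exists_isParent {g f : Sym2 V} (hf : AdjSup G r g f) : ∃ h, IsParent G r g h :=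
  ⟨Function.argminOn r {k | AdjSup G r g k} ⟨f, hf⟩,
    Function.argminOn_mem r {k | AdjSup G r g k} _,
    fun _ hk => Function.argminOn_le r {k | AdjSup G r g k} hk⟩

theorem AdjSup.adjSup_of_lt {g f h : Sym2 V} (hg : g ∈ G.edgeSet) (hf : AdjSup G r g f)
    (hh : AdjSup G r g h) (hlt : r h < r f) : AdjSup G r h f := by
  refine ⟨hf.1, hlt, fun k hk => ?_⟩
  rcases edgesBetween_subset_union hg hh.1 hf.1 hk with rfl | hk | hk
  · exact hh.2.1
  · exact (hh.2.2 k hk).trans hh.2.1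
  · exact (hf.2.2 k hk).trans hh.2.1

theorem AdjSup.reflTransGen_isParent (hr : Set.InjOn r G.edgeSet) {g f : Sym2 V}
    (hg : g ∈ G.edgeSet) (hf : AdjSup G r g f) : Relation.ReflTransGen (IsParent G r) g f := by
  obtain ⟨h, hh⟩ := hf.exists_isParent
  rcases eq_or_ne h f with rfl | hne
  · exact .single hh
  have hlt : r h < r f := (hh.2 f hf).lt_of_ne fun heq => hne (hr hh.1.1 hf.1 heq)
  exact .head hh (AdjSup.reflTransGen_isParent hr hh.1.1 (hf.adjSup_of_lt hg hh.1 hlt))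
termination_by r f - r g
decreasing_by have := hh.1.2.1; omega

theorem AdjSup.forall_edgesBetweenEV_lt {e f : Sym2 V} (he : e ∈ G.edgeSet) (hf : AdjSup G r e f)
    (hlow : ∀ g ∈ edgesBetweenEV G e v, r g < r e) :
    ∀ g ∈ edgesBetweenEV G f v, r g < r f := by
  intro g hg
  rcases edgesBetweenEV_subset_union he hf.1 hg with rfl | hg | hg
  · exact hf.2.1
  · exact (hlow g hg).trans hf.2.1
  · exact (hf.2.2 g hg).trans hf.2.1

theorem forall_edgesBetweenEV_lt_of_mem_spine {estar e : Sym2 V} (hestar : estar ∈ G.edgeSet)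
    (hv : v ∈ estar) (he : e ∈ spine G r estar) : ∀ g ∈ edgesBetweenEV G e v, r g < r e := by
  suffices e ∈ G.edgeSet ∧ ∀ g ∈ edgesBetweenEV G e v, r g < r e from this.2
  induction he with
  | refl => simp [hestar, edgesBetweenEV_eq_empty hestar hv]
  | tail _ hbc ih => exact ⟨hbc.1.1, hbc.1.forall_edgesBetweenEV_lt ih.1 ih.2⟩

theorem SimpleGraph.IsTree.exists_adjSup_of_forall_edgesBetweenEV_lt (hT : G.IsTree)
    (hr : Set.InjOn r G.edgeSet) {e : Sym2 V} (he : e ∈ G.edgeSet) (hv : v ∉ e)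
    (hlow : ∀ g ∈ edgesBetweenEV G e v, r g < r e) :
    ∃ f ∈ edgesBetweenEV G e v, (∀ g ∈ edgesBetweenEV G f v, r g < r f) ∧ AdjSup G r f e := by
  obtain ⟨_, ⟨f, hf, rfl⟩, hmax⟩ := BddAbove.exists_isGreatest_of_nonempty
    ⟨r e, Set.forall_mem_image.mpr fun g hg => (hlow g hg).le⟩
    ((hT.edgesBetweenEV_nonempty he hv).image r)
  have hlt : ∀ g ∈ edgesBetweenEV G e v, g ≠ f → r g < r f := fun g hg hgf =>
    (hmax ⟨g, hg, rfl⟩).lt_of_ne fun h => hgf (hr hg.1 hf.1 h)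
  exact ⟨f, hf, fun g hg => hlt g (hT.edgesBetweenEV_subset he hf hg) hg.2.1,
    he, hlow f hf, fun g hg => hlt g (edgesBetween_subset_edgesBetweenEV hf hg) hg.2.1⟩

theorem SimpleGraph.IsTree.mem_spine_of_forall_edgesBetweenEV_lt (hT : G.IsTree)
    (hr : Set.InjOn r G.edgeSet) {estar : Sym2 V} (hestar : estar ∈ G.edgeSet) (hv : v ∈ estar)
    (hmin : ∀ f ∈ G.edgeSet, v ∈ f → r estar ≤ r f) {e : Sym2 V} (he : e ∈ G.edgeSet)
    (hlow : ∀ g ∈ edgesBetweenEV G e v, r g < r e) : e ∈ spine G r estar := by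
  rcases eq_or_ne e estar with rfl | hne
  · exact .refl
  by_cases hve : v ∈ e
  · have hlt : r estar < r e := (hmin e he hve).lt_of_ne fun h => hne (hr he hestar h.symm)
    refine AdjSup.reflTransGen_isParent hr hestar ⟨he, hlt, fun g hg => ?_⟩
    exact absurd (((mem_edgesBetween_iff hestar he).mp hg).2.2.2 v hv v hve) EdgeSeparates.irrefl
  obtain ⟨f, hf, hflow, hfe⟩ := hT.exists_adjSup_of_forall_edgesBetweenEV_lt hr he hve hlow
  exact (hT.mem_spine_of_forall_edgesBetweenEV_lt hr hestar hv hmin hf.1 hflow).trans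
    (hfe.reflTransGen_isParent hr hf.1)
termination_by r e
decreasing_by exact hfe.2.1

end SLD

theorem stmt14_general (G : SimpleGraph V) (hT : G.IsTree)
    (r : Sym2 V → ℕ) (hr : Set.InjOn r G.edgeSet)
    (v : V) (estar : Sym2 V)
    (hestar : estar ∈ G.edgeSet ∧ v ∈ estar ∧
      ∀ f ∈ G.edgeSet, v ∈ f → r estar ≤ r f)
    (e : Sym2 V) (he : e ∈ G.edgeSet) :
    e ∈ spine G r estar ↔ ∀ g ∈ edgesBetweenEV G e v, r g < r e :=
  ⟨forall_edgesBetweenEV_lt_of_mem_spine hestar.1 hestar.2.1,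
    hT.mem_spine_of_forall_edgesBetweenEV_lt hr hestar.1 hestar.2.1 hestar.2.2 he⟩

/-- Spine-membership characterization used in SLD-Merge: if `e*` is the
minimum-rank edge incident to a vertex `v`, then an edge `e` lies on
`spine(e*)` iff every edge on the tree path from `e` to `v` (excluding `e`
itself) has rank less than `r e`. -/
theorem stmt14 [Fintype V] (G : SimpleGraph V) (hT : G.IsTree)
    (r : Sym2 V → ℕ) (hr : Set.InjOn r G.edgeSet)
    (v : V) (estar : Sym2 V)
    (hestar : estar ∈ G.edgeSet ∧ v ∈ estar ∧
      ∀ f ∈ G.edgeSet, v ∈ f → r estar ≤ r f)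
    (e : Sym2 V) (he : e ∈ G.edgeSet) :
    e ∈ spine G r estar ↔ ∀ g ∈ edgesBetweenEV G e v, r g < r e :=
  stmt14_general G hT r hr v estar hestar e he
end

section
/- (Monotone chain of incident edges; used in handling concurrent rakes.) Let u be a vertex of T and let e, f be two edges incident to u with r(e) < r(f). Then f is an adjacent superior of e, e is an adjacent inferior of f, and spine(f) ⊆ spine(e). -/
/- Single tree setting: `G` is a finite tree with injective edge ranks `r`.
`edgesBetween G e f` is the set of edges strictly between edges `e` and `f`
on the unique tree path connecting them (an edge `g ∉ {e,f}` lies on this path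
iff it belongs to every walk containing both `e` and `f`). -/

open SimpleGraph

variable {V : Type*}

/-- Splice two walks sharing a vertex into one walk whose edge set is the union. -/
lemma exists_walk_union {G : SimpleGraph V} {a b c d x : V}
    (w1 : G.Walk a b) (w2 : G.Walk c d) (hx1 : x ∈ w1.support) (hx2 : x ∈ w2.support) :
    ∃ (p q : V) (W : G.Walk p q), ∀ g, g ∈ W.edges ↔ g ∈ w1.edges ∨ g ∈ w2.edges := by
  classical
  set t1 := w1.takeUntil x hx1 with ht1
  set d1 := w1.dropUntil x hx1 with hd1
  set t2 := w2.takeUntil x hx2 with ht2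
  set d2 := w2.dropUntil x hx2 with hd2
  refine ⟨a, d, t1.append (d1.append (d1.reverse.append (t2.reverse.append (t2.append d2)))),
    fun g => ?_⟩
  have h1 : (t1.append d1).edges = w1.edges := by rw [Walk.take_spec]
  have h2 : (t2.append d2).edges = w2.edges := by rw [Walk.take_spec]
  simp only [Walk.edges_append, List.mem_append, Walk.edges_reverse, List.mem_reverse]
  rw [← h1, ← h2]
  simp only [Walk.edges_append, List.mem_append]
  tauto

/-- If `g` and `f` are adjacent superiors of `e` with `r g < r f`, then `f`
is an adjacent superior of `g`. -/
lemma adjSup_jump {G : SimpleGraph V} {r : Sym2 V → ℕ} {e g f : Sym2 V}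
    (heg : AdjSup G r e g) (hef : AdjSup G r e f) (hgf : r g < r f) :
    AdjSup G r g f := by
  refine ⟨hef.1, hgf, fun h hh => ?_⟩
  obtain ⟨hhE, hhg, hhf, hall⟩ := hh
  by_cases hhe : h = e
  · subst hhe; exact heg.2.1
  -- show `h` lies between `e` and `g` or between `e` and `f`
  have key : h ∈ edgesBetween G e g ∨ h ∈ edgesBetween G e f := by
    by_contra hno
    push_neg at hno
    obtain ⟨hn1, hn2⟩ := hno
    have h1 : ∃ (a b : V) (w : G.Walk a b), e ∈ w.edges ∧ g ∈ w.edges ∧ h ∉ w.edges := by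
      by_contra hc
      push_neg at hc
      exact hn1 ⟨hhE, hhe, hhg, fun a b w hew hgw => hc a b w hew hgw⟩
    have h2 : ∃ (a b : V) (w : G.Walk a b), e ∈ w.edges ∧ f ∈ w.edges ∧ h ∉ w.edges := by
      by_contra hc
      push_neg at hc
      exact hn2 ⟨hhE, hhe, hhf, fun a b w hew hfw => hc a b w hew hfw⟩
    obtain ⟨a1, b1, w1, he1, hg1, hh1⟩ := h1
    obtain ⟨a2, b2, w2, he2, hf2, hh2⟩ := h2
    induction e using Sym2.ind with
    | _ x y =>
      have hx1 : x ∈ w1.support := w1.fst_mem_support_of_mem_edges he1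
      have hx2 : x ∈ w2.support := w2.fst_mem_support_of_mem_edges he2
      obtain ⟨p, q, W, hW⟩ := exists_walk_union w1 w2 hx1 hx2
      have hgW : g ∈ W.edges := (hW g).2 (Or.inl hg1)
      have hfW : f ∈ W.edges := (hW f).2 (Or.inr hf2)
      have : h ∈ W.edges := hall p q W hgW hfW
      rcases (hW h).1 this with h' | h'
      · exact hh1 h'
      · exact hh2 h'
  rcases key with hk | hk
  · exact lt_trans (heg.2.2 h hk) heg.2.1
  · exact lt_trans (hef.2.2 h hk) heg.2.1

/-- Two distinct edges sharing a vertex have nothing strictly between them. -/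
lemma edgesBetween_eq_empty_of_shared {G : SimpleGraph V} {u : V} {e f : Sym2 V}
    (he : e ∈ G.edgeSet) (hf : f ∈ G.edgeSet) (hue : u ∈ e) (huf : u ∈ f)
    (hne : e ≠ f) : edgesBetween G e f = ∅ := by
  ext g
  simp only [Set.mem_empty_iff_false, iff_false]
  rintro ⟨hgE, hge, hgf, hall⟩
  set a := Sym2.Mem.other hue with ha
  set b := Sym2.Mem.other huf with hb
  have hea : s(u, a) = e := Sym2.other_spec hue
  have hfb : s(u, b) = f := Sym2.other_spec huf
  have hadja : G.Adj u a := G.mem_edgeSet.mp (hea ▸ he)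
  have hadjb : G.Adj u b := G.mem_edgeSet.mp (hfb ▸ hf)
  let w : G.Walk a b := Walk.cons hadja.symm (Walk.cons hadjb Walk.nil)
  have hwe : w.edges = [s(a, u), s(u, b)] := rfl
  have hew : e ∈ w.edges := by
    rw [hwe]
    have : s(a, u) = e := Sym2.eq_swap.trans hea
    simp [this]
  have hfw : f ∈ w.edges := by rw [hwe]; simp [hfb]
  have := hall a b w hew hfw
  rw [hwe] at this
  simp only [List.mem_cons, List.not_mem_nil, or_false] at this
  rcases this with h1 | h1
  · exact hge (h1.trans (Sym2.eq_swap.trans hea))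
  · exact hgf (h1.trans hfb)

/-- Every edge with a nonempty set of adjacent superiors has a parent. -/
lemma exists_parent {G : SimpleGraph V} {r : Sym2 V → ℕ} {e f : Sym2 V}
    (h : AdjSup G r e f) : ∃ g, IsParent G r e g ∧ r g ≤ r f := by
  set S : Set ℕ := r '' {g | AdjSup G r e g} with hS
  have hne : S.Nonempty := ⟨r f, f, h, rfl⟩
  obtain ⟨g, hg, hgr⟩ := Nat.sInf_mem hne
  refine ⟨g, ⟨hg, fun g' hg' => ?_⟩, ?_⟩
  · rw [hgr]; exact Nat.sInf_le ⟨g', hg', rfl⟩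
  · rw [hgr]; exact Nat.sInf_le ⟨f, h, rfl⟩

/-- Any adjacent superior of `e` lies on the spine of `e`. -/
lemma adjSup_mem_spine {G : SimpleGraph V} {r : Sym2 V → ℕ}
    (hr : Set.InjOn r G.edgeSet) :
    ∀ (n : ℕ) (e f : Sym2 V), r f - r e ≤ n → e ∈ G.edgeSet → AdjSup G r e f →
      Relation.ReflTransGen (IsParent G r) e f := by
  intro n
  induction n with
  | zero =>
    intro e f hle _ hsup
    have := hsup.2.1
    omega
  | succ n ih =>
    intro e f hle heE hsup
    obtain ⟨g, hpar, hgle⟩ := exists_parent hsup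
    have hgE : g ∈ G.edgeSet := hpar.1.1
    by_cases hgf : r g = r f
    · have : g = f := hr hgE hsup.1 hgf
      exact Relation.ReflTransGen.single (this ▸ hpar)
    · have hlt : r g < r f := lt_of_le_of_ne hgle hgf
      have hgsup : AdjSup G r g f := adjSup_jump hpar.1 hsup hlt
      have hrec : r f - r g ≤ n := by
        have := hpar.1.2.1
        omega
      exact Relation.ReflTransGen.head hpar (ih g f hrec hgE hgsup)

/-- Monotone chain of incident edges: if `e` and `f` are both incident to `u`
with `r e < r f`, then `f` is an adjacent superior of `e`, `e` is an adjacent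
inferior of `f`, and `spine(f) ⊆ spine(e)`. -/
theorem stmt15 [Fintype V] (G : SimpleGraph V) (hT : G.IsTree)
    (r : Sym2 V → ℕ) (hr : Set.InjOn r G.edgeSet)
    (u : V) (e f : Sym2 V) (he : e ∈ G.edgeSet) (hf : f ∈ G.edgeSet)
    (hue : u ∈ e) (huf : u ∈ f) (hef : r e < r f) :
    AdjSup G r e f ∧ AdjInf G r f e ∧ spine G r f ⊆ spine G r e := by
  have hne : e ≠ f := fun h => absurd (h ▸ hef) (lt_irrefl _)
  have hempty1 : edgesBetween G e f = ∅ :=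
    edgesBetween_eq_empty_of_shared he hf hue huf hne
  have hempty2 : edgesBetween G f e = ∅ :=
    edgesBetween_eq_empty_of_shared hf he huf hue hne.symm
  have hsup : AdjSup G r e f :=
    ⟨hf, hef, fun g hg => absurd (hempty1 ▸ hg) (Set.notMem_empty g)⟩
  have hinf : AdjInf G r f e :=
    ⟨he, hef, fun g hg => absurd (hempty2 ▸ hg) (Set.notMem_empty g)⟩
  refine ⟨hsup, hinf, fun x hx => ?_⟩
  have hspine : Relation.ReflTransGen (IsParent G r) e f :=
    adjSup_mem_spine hr (r f - r e) e f le_rfl he hsup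
  exact hspine.trans hx
end
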